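/- arXiv:1004.0475 — 2 statements merged into one kernel-verified Lean document; each statement's English description precedes it below -/
import Mathlib

section
/- Let $P_0$ be a polynomial with simple roots $p_1, \ldots, p_m$ and let $K \subset \mathbb{C}$ be a compact set with $|y - p_k| \geq \epsilon > 0$ for all $y \in K$ and all $k$. Suppose functions $F_0, F_1, \ldots$ are analytic on a neighborhood of $K$ and satisfy $F_0'(y) = 1/P_0(y)$ and the recursion $F_k'(y) = \big((k-1)F_{k-1}(y) - \sum_{j=0}^{k-1} P_{k-j}(y) F_j'(y)\big)/P_0(y)$ for $k \geq 1$, where the $P_j$ are polynomials with $\sup_{y \in K} |P_j(y)| \leq B$ for all $j$, and suppose $\sup_{y\in K} |F_k(y)| \leq A_k$ where $A_k$ is finite for each $k$. If $A_k \leq M k! $ for all $k < n$ and $\sup_K|F_j'| \leq M' j!$ for all $j < n$, then $\sup_{y \in K} |F_n'(y)| \leq C \cdot n!$ for a constant $C$ depending only on $M, M', B, \epsilon, P_0, K$ and not on $n$. -/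
open Polynomial Finset
open scoped Nat

/-!
Dividing the recursion for `F n'` by `P₀`, the numerator is bounded by `(M + B M') n!`: the
term `(n - 1) F_{n-1}` contributes `M n!`, and the convolution `∑ P_{n-j} F_j'` at most
`B M' ∑_{j<n} j! ≤ B M' n!`. The denominator is bounded below on `K` by a positive constant,
since `P₀` is continuous and, `K` staying away from its roots, has no zero on the compact set `K`.
-/

theorem Nat.sum_range_factorial_le (n : ℕ) : ∑ j ∈ range n, j ! ≤ n ! := by
  cases n with
  | zero => simp
  | succ n =>
    calc ∑ j ∈ range (n + 1), j ! ≤ #(range (n + 1)) • n ! :=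
          sum_le_card_nsmul _ _ _ fun j hj ↦
            Nat.factorial_le (Nat.lt_succ_iff.mp (mem_range.mp hj))
      _ = (n + 1)! := by rw [card_range, smul_eq_mul, Nat.factorial_succ]

theorem IsCompact.exists_pos_forall_le_norm {X E : Type*} [TopologicalSpace X]
    [NormedAddCommGroup E] {K : Set X} {f : X → E} (hK : IsCompact K) (hf : ContinuousOn f K)
    (hf0 : ∀ x ∈ K, f x ≠ 0) : ∃ δ > 0, ∀ x ∈ K, δ ≤ ‖f x‖ := by
  rcases K.eq_empty_or_nonempty with rfl | hne
  · exact ⟨1, one_pos, by simp⟩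
  obtain ⟨x₀, hx₀, hmin⟩ := hK.exists_isMinOn hne (continuous_norm.comp_continuousOn hf)
  exact ⟨‖f x₀‖, norm_pos_iff.mpr (hf0 x₀ hx₀), fun x hx ↦ hmin hx⟩

section NormBounds

variable {𝕜 : Type*} [NormedRing 𝕜]

theorem norm_natCast_sub_one_mul_le_factorial [NormOneClass 𝕜] {n : ℕ} (hn : 1 ≤ n) {a : 𝕜}
    {M : ℝ} (ha : ‖a‖ ≤ M * (n - 1)!) : ‖((n : 𝕜) - 1) * a‖ ≤ M * n ! := by
  have hcast : (n : 𝕜) - 1 = ((n - 1 : ℕ) : 𝕜) := by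
    rw [Nat.cast_sub hn, Nat.cast_one]
  calc ‖((n : 𝕜) - 1) * a‖ ≤ (n : ℝ) * ‖a‖ := by
        rw [hcast]
        refine (norm_mul_le _ _).trans (mul_le_mul_of_nonneg_right ?_ (norm_nonneg a))
        exact (Nat.norm_cast_le (n - 1)).trans (by simp)
    _ ≤ n * (M * (n - 1)!) := mul_le_mul_of_nonneg_left ha n.cast_nonneg
    _ = M * n ! := by
        rw [← Nat.mul_factorial_pred (by omega : n ≠ 0), Nat.cast_mul]
        ring

theorem norm_sum_range_mul_le_factorial {n : ℕ} {b c : ℕ → 𝕜} {B M' : ℝ} (hB : 0 ≤ B)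
    (hM' : 0 ≤ M') (hb : ∀ j < n, ‖b j‖ ≤ B) (hc : ∀ j < n, ‖c j‖ ≤ M' * j !) :
    ‖∑ j ∈ range n, b j * c j‖ ≤ B * M' * n ! :=
  calc ‖∑ j ∈ range n, b j * c j‖ ≤ ∑ j ∈ range n, B * (M' * j !) := by
        refine (norm_sum_le _ _).trans (sum_le_sum fun j hj ↦ ?_)
        have hj := mem_range.mp hj
        exact (norm_mul_le _ _).trans (mul_le_mul (hb j hj) (hc j hj) (norm_nonneg _) hB)
    _ = B * M' * ∑ j ∈ range n, (j ! : ℝ) := by simp only [mul_sum, mul_assoc]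
    _ ≤ B * M' * n ! := by
        gcongr
        exact_mod_cast Nat.sum_range_factorial_le n

end NormBounds

theorem stmt_7_general (K : Set ℂ) (hK : IsCompact K)
    (P : ℕ → Polynomial ℂ) (m : ℕ) (p : Fin m → ℂ) (ε B M M' : ℝ)
    (hε : 0 < ε) (hB : 0 < B) (hM : 0 < M) (hM' : 0 < M')
    (hroots : (P 0).roots.toFinset = Finset.image p Finset.univ)
    (hsimple : Squarefree (P 0))
    (hsep : ∀ y ∈ K, ∀ i : Fin m, ε ≤ ‖y - p i‖)
    (F : ℕ → ℂ → ℂ)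
    (hrec : ∀ k : ℕ, 1 ≤ k → ∀ y ∈ K,
      deriv (F k) y = (((k : ℂ) - 1) * F (k - 1) y
        - ∑ j ∈ Finset.range k, (P (k - j)).eval y * deriv (F j) y) / (P 0).eval y)
    (hPbound : ∀ j : ℕ, ∀ y ∈ K, ‖(P j).eval y‖ ≤ B) :
    ∃ C : ℝ, 0 < C ∧ ∀ n : ℕ, 1 ≤ n →
      (∀ k < n, ∀ y ∈ K, ‖F k y‖ ≤ M * (Nat.factorial k)) →
      (∀ j < n, ∀ y ∈ K, ‖deriv (F j) y‖ ≤ M' * (Nat.factorial j)) →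
      ∀ y ∈ K, ‖deriv (F n) y‖ ≤ C * (Nat.factorial n) := by
  have hP0 : ∀ y ∈ K, (P 0).eval y ≠ 0 := by
    intro y hy hroot
    have hy' : y ∈ image p univ :=
      hroots ▸ Multiset.mem_toFinset.mpr ((mem_roots hsimple.ne_zero).mpr hroot)
    obtain ⟨i, -, rfl⟩ := mem_image.mp hy'
    exact hε.not_ge (by simpa using hsep _ hy i)
  obtain ⟨δ, hδ, hδK⟩ :=
    hK.exists_pos_forall_le_norm (P 0).continuous.continuousOn hP0
  refine ⟨(M + B * M') / δ, by positivity, fun n hn hF hF' y hy ↦ ?_⟩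
  have hnum : ‖((n : ℂ) - 1) * F (n - 1) y
      - ∑ j ∈ range n, (P (n - j)).eval y * deriv (F j) y‖ ≤ (M + B * M') * n ! := by
    refine (norm_sub_le _ _).trans ?_
    rw [add_mul]
    exact add_le_add (norm_natCast_sub_one_mul_le_factorial hn (hF (n - 1) (by omega) y hy))
      (norm_sum_range_mul_le_factorial hB.le hM'.le (fun j _ ↦ hPbound (n - j) y hy)
        (fun j hj ↦ hF' j hj y hy))
  rw [hrec n hn y hy, norm_div, div_mul_eq_mul_div]
  exact div_le_div₀ (by positivity) hnum hδ (hδK y hy)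

theorem stmt_7 (K : Set ℂ) (hK : IsCompact K)
    (P : ℕ → Polynomial ℂ) (m : ℕ) (p : Fin m → ℂ) (ε B M M' : ℝ)
    (hε : 0 < ε) (hB : 0 < B) (hM : 0 < M) (hM' : 0 < M')
    (hroots : (P 0).roots.toFinset = Finset.image p Finset.univ)
    (hsimple : Squarefree (P 0))
    (hsep : ∀ y ∈ K, ∀ i : Fin m, ε ≤ ‖y - p i‖)
    (U : Set ℂ) (hU : IsOpen U) (hKU : K ⊆ U)
    (F : ℕ → ℂ → ℂ)
    (hFanal : ∀ k : ℕ, AnalyticOn ℂ (F k) U)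
    (hF0 : ∀ y ∈ K, deriv (F 0) y = 1 / (P 0).eval y)
    (hrec : ∀ k : ℕ, 1 ≤ k → ∀ y ∈ K,
      deriv (F k) y = (((k : ℂ) - 1) * F (k - 1) y
        - ∑ j ∈ Finset.range k, (P (k - j)).eval y * deriv (F j) y) / (P 0).eval y)
    (hPbound : ∀ j : ℕ, ∀ y ∈ K, ‖(P j).eval y‖ ≤ B) :
    ∃ C : ℝ, 0 < C ∧ ∀ n : ℕ, 1 ≤ n →
      (∀ k < n, ∀ y ∈ K, ‖F k y‖ ≤ M * (Nat.factorial k)) →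
      (∀ j < n, ∀ y ∈ K, ‖deriv (F j) y‖ ≤ M' * (Nat.factorial j)) →
      ∀ y ∈ K, ‖deriv (F n) y‖ ≤ C * (Nat.factorial n) :=
  stmt_7_general K hK P m p ε B M M' hε hB hM hM' hroots hsimple hsep F hrec hPbound
end

section
/- Let $C_n(y,x) = -x + a\log x + F_0(y) + \sum_{k=1}^n F_k(y)/x^k$, where the functions $F_k$ are differentiable and satisfy $P_0 F_0' = 1$, $a + P_1 F_0' + P_0 F_1' = 0$, and $(1-k)F_{k-1} + \sum_{j=0}^k P_{k-j} F_j' = 0$ for $2 \leq k \leq n$, with $P_j$ the coefficients of $Q_1(y,1/x) = \sum_{k=0}^\infty P_k(y) x^{-k}$ (convergent for $|x| > R$). Then for any differentiable $y(x)$ solving $y' = Q_1(y, 1/x)$, one has $\frac{d}{dx} C_n(y(x), x) = x^{-(n+1)}\left(-n F_n(y) + \sum_{j=0}^n \sum_{k=0}^\infty P_{n+k+1-j}(y) F_j'(y) x^{-k}\right)$ for $|x| > R$. -/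
/-!
Write `t = 1/x` and `T = ∑ P_k(y) t^k = y'`. The derivative of `C_n(y(x), x)` is
`-1 + a t + (∑_{j ≤ n} F'_j(y) t^j) T - ∑_{k ≤ n} k F_k(y) t^(k+1)`. Splitting the product
`(∑_{j ≤ n} F'_j t^j) T` into its Cauchy coefficients `c_k` of order `k ≤ n` and a tail
`t^(n+1) (…)`, the defining relations say `c_0 = 1`, `c_1 = -a` and `c_k = (k-1) F_(k-1)`,
so everything cancels in pairs except `-n F_n t^(n+1)`.
-/

open Finset

section PowerSeriesTail

variable {𝕜 : Type*} [Field 𝕜] [TopologicalSpace 𝕜] [IsTopologicalRing 𝕜]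
  {p : ℕ → 𝕜} {t : 𝕜}

theorem summable_shift_mul_pow (hs : Summable fun m => p m * t ^ m) (ht : t ≠ 0) {j N : ℕ}
    (hjN : j ≤ N) : Summable fun k => p (N + k - j) * t ^ k := by
  refine (((summable_nat_add_iff (N - j)).2 hs).mul_left (t ^ (N - j))⁻¹).congr fun k => ?_
  rw [show N + k - j = k + (N - j) by omega, pow_add]
  field_simp

variable [T2Space 𝕜]

theorem pow_mul_tsum_eq_sum_Ico_add_tail (hs : Summable fun m => p m * t ^ m) {j N : ℕ}
    (hjN : j ≤ N) :
    t ^ j * ∑' m, p m * t ^ m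
      = ∑ k ∈ Ico j N, p (k - j) * t ^ k + t ^ N * ∑' k, p (N + k - j) * t ^ k := by
  rw [← hs.sum_add_tsum_nat_add (N - j), mul_add, mul_sum, ← tsum_mul_left, ← tsum_mul_left,
    sum_Ico_eq_sum_range]
  congr 1
  · refine sum_congr rfl fun m _ => ?_
    rw [Nat.add_sub_cancel_left, pow_add]
    ring
  · refine tsum_congr fun k => ?_
    rw [show N + k - j = k + (N - j) by omega, mul_left_comm, ← pow_add, mul_left_comm (t ^ N),
      ← pow_add, show j + (k + (N - j)) = N + k by omega]

theorem sum_mul_tsum_eq_sum_cauchy_add_tail (f : ℕ → 𝕜) (hs : Summable fun m => p m * t ^ m)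
    (ht : t ≠ 0) (n : ℕ) :
    (∑ j ∈ range (n + 1), f j * t ^ j) * ∑' m, p m * t ^ m
      = ∑ k ∈ range (n + 1), (∑ j ∈ range (k + 1), p (k - j) * f j) * t ^ k
        + t ^ (n + 1) * ∑' k, (∑ j ∈ range (n + 1), p (n + k + 1 - j) * f j) * t ^ k := by
  have hsplit : ∀ j ∈ range (n + 1), f j * t ^ j * ∑' m, p m * t ^ m
      = ∑ k ∈ Ico j (n + 1), f j * (p (k - j) * t ^ k)
        + t ^ (n + 1) * ∑' k, p (n + 1 + k - j) * f j * t ^ k := fun j hj => by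
    rw [mul_assoc, pow_mul_tsum_eq_sum_Ico_add_tail hs
      (Nat.le_succ_of_le (mem_range_succ_iff.1 hj)), mul_add, mul_sum, mul_left_comm,
      ← tsum_mul_left]
    congr 3
    funext k
    ring
  have htail : ∀ j ∈ range (n + 1), Summable fun k => p (n + 1 + k - j) * f j * t ^ k :=
    fun j hj => by
      simpa only [mul_right_comm _ (f j)] using
        (summable_shift_mul_pow hs ht (Nat.le_succ_of_le (mem_range_succ_iff.1 hj))).mul_right (f j)
  rw [sum_mul, sum_congr rfl hsplit, sum_add_distrib, ← mul_sum, ← Summable.tsum_finsetSum htail,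
    range_eq_Ico, sum_Ico_Ico_comm]
  simp only [sum_mul, ← range_eq_Ico, Nat.add_right_comm n]
  congr 1
  exact sum_congr rfl fun k _ => sum_congr rfl fun j _ => by ring

end PowerSeriesTail

theorem summable_mul_ofReal_inv_pow {p : ℕ → ℂ} {x : ℝ} (hx : 0 ≤ x)
    (h : Summable fun k => ‖p k‖ * x ^ (-(k : ℤ))) :
    Summable fun k => p k * ((x : ℂ)⁻¹) ^ k := by
  refine Summable.of_norm (h.congr fun k => ?_)
  rw [norm_mul, norm_pow, norm_inv, Complex.norm_real, Real.norm_of_nonneg hx, zpow_neg,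
    zpow_natCast, inv_pow]

theorem telescoping_sum_of_coeff_relations {R : Type*} [CommRing R] (a t : R) (c g : ℕ → R)
    {n : ℕ} (hn : 1 ≤ n) (hc0 : c 0 = 1) (hc1 : a + c 1 = 0)
    (hck : ∀ k, 2 ≤ k → k ≤ n → (1 - (k : R)) * g (k - 1) + c k = 0) :
    -1 + a * t + ∑ k ∈ range (n + 1), c k * t ^ k - ∑ k ∈ range (n + 1), k * g k * t ^ (k + 1)
      = -n * g n * t ^ (n + 1) := by
  induction n, hn using Nat.le_induction with
  | base =>
    simp only [sum_range_succ, sum_range_zero]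
    linear_combination hc0 + t * hc1
  | succ n hn ih =>
    have hstep := hck (n + 1) (by omega) le_rfl
    rw [sum_range_succ, sum_range_succ _ (n + 1)]
    push_cast at hstep ⊢
    linear_combination ih (fun k hk hkn => hck k hk (by omega)) + t ^ (n + 1) * hstep

theorem hasDerivAt_ofReal_inv_pow {x : ℝ} (hx : x ≠ 0) (k : ℕ) :
    HasDerivAt (fun x : ℝ => ((x : ℂ)⁻¹) ^ k) (-k * ((x : ℂ)⁻¹) ^ (k + 1)) x := by
  have hxC : (x : ℂ) ≠ 0 := Complex.ofReal_ne_zero.2 hx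
  refine (((hasDerivAt_id x).ofReal_comp.inv hxC).pow k).congr_deriv ?_
  rcases k with _ | k
  · simp
  · simp only [id, Pi.inv_apply, Complex.ofReal_one, Nat.add_sub_cancel, div_eq_mul_inv,
      inv_pow]
    ring

theorem hasDerivAt_sum_comp_mul_ofReal_inv_pow {F F' : ℕ → ℂ → ℂ} {y : ℝ → ℂ} {T : ℂ}
    {x : ℝ} (hx : x ≠ 0) (hF : ∀ k, HasDerivAt (F k) (F' k (y x)) (y x))
    (hy : HasDerivAt y T x) (s : Finset ℕ) :
    HasDerivAt (fun x : ℝ => ∑ k ∈ s, F k (y x) * ((x : ℂ)⁻¹) ^ k)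
      ((∑ k ∈ s, F' k (y x) * ((x : ℂ)⁻¹) ^ k) * T
        - ∑ k ∈ s, k * F k (y x) * ((x : ℂ)⁻¹) ^ (k + 1)) x := by
  refine (HasDerivAt.fun_sum fun k _ =>
    ((hF k).comp x hy).mul (hasDerivAt_ofReal_inv_pow hx k)).congr_deriv ?_
  rw [sum_mul, ← sum_sub_distrib]
  exact sum_congr rfl fun k _ => by rw [Function.comp_apply]; ring

theorem stmt_8 (R : ℝ) (hR : 0 < R) (a : ℂ) (n : ℕ) (hn : 2 ≤ n)
    (P : ℕ → ℂ → ℂ) (F F' : ℕ → ℂ → ℂ) (y : ℝ → ℂ)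
    (hconv : ∀ z : ℂ, ∀ x : ℝ, x > R → Summable (fun k : ℕ => ‖P k z‖ * x ^ (-(k : ℤ))))
    (hF : ∀ k : ℕ, ∀ z : ℂ, HasDerivAt (F k) (F' k z) z)
    (heq0 : ∀ z : ℂ, P 0 z * F' 0 z = 1)
    (heq1 : ∀ z : ℂ, a + P 1 z * F' 0 z + P 0 z * F' 1 z = 0)
    (heqk : ∀ k : ℕ, 2 ≤ k → k ≤ n → ∀ z : ℂ,
      (1 - (k : ℂ)) * F (k - 1) z + ∑ j ∈ Finset.range (k + 1), P (k - j) z * F' j z = 0)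
    (hy : ∀ x : ℝ, x > R →
      HasDerivAt y (∑' k : ℕ, P k (y x) * (x : ℂ) ^ (-(k : ℤ))) x) :
    ∀ x : ℝ, x > R →
      HasDerivAt (fun x : ℝ => -(x : ℂ) + a * Real.log x + F 0 (y x)
          + ∑ k ∈ Finset.Icc 1 n, F k (y x) * (x : ℂ) ^ (-(k : ℤ)))
        ((x : ℂ) ^ (-((n : ℤ) + 1)) * (-(n : ℂ) * F n (y x)
          + ∑' k : ℕ, (∑ j ∈ Finset.range (n + 1),
              P (n + k + 1 - j) (y x) * F' j (y x)) * (x : ℂ) ^ (-(k : ℤ)))) x := by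
  intro x hx
  have hx0 : 0 < x := hR.trans hx
  have hzpow : ∀ (x : ℝ) (k : ℕ), (x : ℂ) ^ (-(k : ℤ)) = ((x : ℂ)⁻¹) ^ k := fun x k => by
    rw [zpow_neg, zpow_natCast, inv_pow]
  have hs := summable_mul_ofReal_inv_pow hx0.le (hconv (y x) x hx)
  have hT := hy x hx
  simp_rw [hzpow] at hT ⊢
  have hfun : (fun x : ℝ => -(x : ℂ) + a * Real.log x + F 0 (y x)
        + ∑ k ∈ Icc 1 n, F k (y x) * ((x : ℂ)⁻¹) ^ k)
      = fun x : ℝ =>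
          -(x : ℂ) + a * Real.log x + ∑ k ∈ range (n + 1), F k (y x) * ((x : ℂ)⁻¹) ^ k := by
    funext x
    rw [sum_range_eq_add_Ico _ (by omega : 0 < n + 1), Ico_add_one_right_eq_Icc, pow_zero,
      mul_one, add_assoc]
  rw [hfun]
  refine (((Complex.ofRealCLM.hasDerivAt.neg).add
      ((Real.hasDerivAt_log hx0.ne').ofReal_comp.const_mul a)).add
      (hasDerivAt_sum_comp_mul_ofReal_inv_pow hx0.ne' (fun k => hF k (y x)) hT _)).congr_deriv ?_
  have hpow : (x : ℂ) ^ (-((n : ℤ) + 1)) = ((x : ℂ)⁻¹) ^ (n + 1) := by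
    exact_mod_cast hzpow x (n + 1)
  have hxC : (x : ℂ) ≠ 0 := Complex.ofReal_ne_zero.2 hx0.ne'
  rw [Complex.ofRealCLM_apply, Complex.ofReal_one, Complex.ofReal_inv, hpow,
    sum_mul_tsum_eq_sum_cauchy_add_tail _ hs (inv_ne_zero hxC) n]
  have hc1 : a + ∑ j ∈ range 2, P (1 - j) (y x) * F' j (y x) = 0 := by
    simpa [sum_range_succ, add_assoc] using heq1 (y x)
  linear_combination telescoping_sum_of_coeff_relations a (x : ℂ)⁻¹ _ (fun k => F k (y x))
    (by omega : 1 ≤ n) (by simpa using heq0 (y x)) hc1 (fun k hk hkn => heqk k hk hkn (y x))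
end
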